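/- arXiv:2510.20623 — 4 statements merged into one kernel-verified Lean document; each statement's English description precedes it below -/
import Mathlib

section
/- Let W : ℝ^{3×3} → ℝ be differentiable at every point and frame indifferent, i.e. W(RF) = W(F) for every R ∈ SO(3) and every F ∈ ℝ^{3×3}. Then for every F ∈ ℝ^{3×3} the matrix DW(F)Fᵀ is symmetric, i.e. DW(F)Fᵀ = F(DW(F))ᵀ. (The proof differentiates t ↦ W(e^{tS}F) at t = 0 for skew-symmetric S.) -/
/- STATEMENT 1: For a frame-indifferent differentiable stored energy function
`W : ℝ^{3×3} → ℝ`, the matrix `DW(F)Fᵀ` is symmetric for every `F`: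
`DW(F)Fᵀ = F(DW(F))ᵀ`. -/

open Matrix

noncomputable section

attribute [local instance]
  Matrix.frobeniusNormedAddCommGroup Matrix.frobeniusNormedSpace

abbrev Mat3 := Matrix (Fin 3) (Fin 3) ℝ

/-- The special orthogonal group SO(3). -/
def SO3 : Set Mat3 := {R | Rᵀ * R = 1 ∧ R.det = 1}

/-- The Frobenius inner product `A : B = Σᵢⱼ Aᵢⱼ Bᵢⱼ`. -/
def finner (A B : Mat3) : ℝ := ∑ i, ∑ j, A i j * B i j

/-! For skew-symmetric `S` the matrices `exp (t • S)` are rotations, so `t ↦ W (exp (t • S) * F)`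
is constant and its derivative at `0` gives `DW(F) : S F = S : DW(F) Fᵀ = 0`. A matrix that is
Frobenius-orthogonal to every skew-symmetric matrix is symmetric. -/

attribute [local instance] Matrix.frobeniusNormedRing Matrix.frobeniusNormedAlgebra

open NormedSpace

namespace Matrix

variable {n : Type*} [Fintype n] [DecidableEq n]

theorem exp_transpose_mul_exp_of_transpose_eq_neg {S : Matrix n n ℝ} (hS : Sᵀ = -S) :
    (exp S)ᵀ * exp S = 1 := by
  rw [← exp_transpose, hS, ← exp_add_of_commute _ _ (Commute.refl S).neg_left, neg_add_cancel,
    exp_zero]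

theorem exp_mem_specialOrthogonalGroup {S : Matrix n n ℝ} (hS : Sᵀ = -S) :
    exp S ∈ specialOrthogonalGroup n ℝ := by
  have hdet_sq : (exp S).det ^ 2 = 1 := by
    simpa [sq, det_transpose] using congrArg det (exp_transpose_mul_exp_of_transpose_eq_neg hS)
  -- `exp S = exp (S / 2) ^ 2` has a square determinant, ruling out `det (exp S) = -1`.
  have hdet_nonneg : 0 ≤ (exp S).det := by
    have hhalf : exp S = exp ((1 / 2 : ℝ) • S) * exp ((1 / 2 : ℝ) • S) := by
      rw [← exp_add_of_commute _ _ (Commute.refl _), ← add_smul]; norm_num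
    rw [hhalf, det_mul]
    exact mul_self_nonneg _
  exact ⟨(mem_orthogonalGroup_iff' n ℝ).2 (exp_transpose_mul_exp_of_transpose_eq_neg hS),
    (pow_eq_one_iff_of_nonneg hdet_nonneg two_ne_zero).1 hdet_sq⟩

end Matrix

section RotationInvariance

variable {n : Type*} [Fintype n] [DecidableEq n]
  {E : Type*} [NormedAddCommGroup E] [NormedSpace ℝ E]

theorem fderiv_skew_mul_eq_zero_of_rotation_invariant {W : Matrix n n ℝ → E} {F : Matrix n n ℝ}
    (hW : DifferentiableAt ℝ W F)
    (hinv : ∀ R ∈ specialOrthogonalGroup n ℝ, W (R * F) = W F)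
    {S : Matrix n n ℝ} (hS : Sᵀ = -S) :
    fderiv ℝ W F (S * F) = 0 := by
  have hcurve : HasDerivAt (fun t : ℝ => exp (t • S) * F) (S * F) 0 := by
    have := (hasDerivAt_exp_smul_const (𝕂 := ℝ) S 0).mul_const F
    rwa [zero_smul, exp_zero, one_mul] at this
  have hcomp : HasDerivAt (fun t : ℝ => W (exp (t • S) * F)) (fderiv ℝ W F (S * F)) 0 := by
    refine HasFDerivAt.comp_hasDerivAt 0 ?_ hcurve
    rw [zero_smul, exp_zero, one_mul]
    exact hW.hasFDerivAt
  have hconst : (fun t : ℝ => W (exp (t • S) * F)) = fun _ => W F := by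
    funext t
    refine hinv _ (exp_mem_specialOrthogonalGroup ?_)
    rw [transpose_smul, hS, smul_neg]
  rw [hconst] at hcomp
  exact hcomp.unique (hasDerivAt_const 0 (W F))

end RotationInvariance

theorem mem_SO3_iff {R : Mat3} : R ∈ SO3 ↔ R ∈ specialOrthogonalGroup (Fin 3) ℝ := by
  rw [mem_specialOrthogonalGroup_iff, mem_orthogonalGroup_iff']
  rfl

theorem finner_eq_trace (A B : Mat3) : finner A B = (A * Bᵀ).trace := by
  simp [finner, Matrix.trace, Matrix.mul_apply]

theorem finner_mul_right (A S F : Mat3) : finner A (S * F) = finner S (A * Fᵀ) := by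
  rw [finner_eq_trace, finner_eq_trace, ← trace_transpose]
  simp only [transpose_mul, transpose_transpose, Matrix.mul_assoc]

theorem finner_sub_right (A B C : Mat3) : finner A (B - C) = finner A B - finner A C := by
  simp only [finner_eq_trace, transpose_sub, Matrix.mul_sub, trace_sub]

theorem finner_transpose_right (A B : Mat3) : finner A Bᵀ = finner Aᵀ B := by
  rw [finner_eq_trace, finner_eq_trace, transpose_transpose, trace_mul_comm, ← trace_transpose,
    transpose_mul]

theorem finner_self_eq_zero_iff {A : Mat3} : finner A A = 0 ↔ A = 0 := by
  rw [finner_eq_trace, ← conjTranspose_eq_transpose_of_trivial,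
    trace_mul_conjTranspose_self_eq_zero_iff]

theorem eq_transpose_of_finner_skew_eq_zero {M : Mat3}
    (h : ∀ S : Mat3, Sᵀ = -S → finner S M = 0) : M = Mᵀ := by
  have hskew : (M - Mᵀ)ᵀ = -(M - Mᵀ) := by rw [transpose_sub, transpose_transpose, neg_sub]
  have hskewT : (M - Mᵀ)ᵀᵀ = -(M - Mᵀ)ᵀ := by rw [transpose_transpose, hskew, neg_neg]
  have hself : finner (M - Mᵀ) (M - Mᵀ) = 0 := by
    rw [finner_sub_right, finner_transpose_right, h _ hskew, h _ hskewT, sub_zero]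
  exact sub_eq_zero.1 (finner_self_eq_zero_iff.1 hself)

theorem DW_mul_transpose_symmetric
    (W : Mat3 → ℝ) (DW : Mat3 → Mat3)
    (hdiff : Differentiable ℝ W)
    (hDW : ∀ F H : Mat3, fderiv ℝ W F H = finner (DW F) H)
    (hfi : ∀ R ∈ SO3, ∀ F : Mat3, W (R * F) = W F) :
    ∀ F : Mat3, DW F * Fᵀ = F * (DW F)ᵀ := by
  intro F
  have hskew : ∀ S : Mat3, Sᵀ = -S → finner S (DW F * Fᵀ) = 0 := fun S hS => by
    rw [← finner_mul_right, ← hDW]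
    exact fderiv_skew_mul_eq_zero_of_rotation_invariant (hdiff F)
      (fun R hR => hfi R (mem_SO3_iff.2 hR) F) hS
  rw [eq_transpose_of_finner_skew_eq_zero hskew, transpose_mul, transpose_transpose]
end
end

section
/- Let W : ℝ^{3×3} → [0, ∞) be twice continuously differentiable on an open neighborhood of the identity matrix Id and satisfy W(R) = 0 for every R ∈ SO(3). Define ℒ : ℝ^{3×3} → ℝ^{3×3} by ⟨ℒF₁, F₂⟩ = D²W(Id)[F₁, F₂]. Then for every F ∈ ℝ^{3×3} the matrix ℒF is symmetric, and the quadratic form Q(F) := ⟨ℒF, F⟩ satisfies Q(F) ≥ 0 and Q(F) = Q(sym F) for every F. -/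
/- STATEMENT 5: With `W : ℝ^{3×3} → [0,∞)` C² near `Id`, vanishing on SO(3), and
`ℒ` defined by `⟨ℒF₁, F₂⟩ = D²W(Id)[F₁,F₂]`: for every `F` the matrix `ℒF` is symmetric,
and `Q(F) := ⟨ℒF, F⟩` satisfies `Q(F) ≥ 0` and `Q(F) = Q(sym F)`. -/

open Matrix

noncomputable section

attribute [local instance]
  Matrix.frobeniusNormedAddCommGroup Matrix.frobeniusNormedSpace

/-- The symmetric part of a matrix. -/
def symPart (M : Mat3) : Mat3 := (1 / 2 : ℝ) • (M + Mᵀ)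

/-!
`W` attains its minimum `0` at every rotation. At `Id` this makes `D²W(Id)` positive
semidefinite, and since `DW` vanishes along the curve `t ↦ exp (t A)` in SO(3) for skew `A`,
differentiating at `t = 0` gives `D²W(Id)[A, ·] = 0`. Together with Schwarz's symmetry of
`D²W(Id)`, the form only sees the symmetric parts of its arguments, whence `(ℒF)ᵀ = ℒF` and
`Q(F) = Q(sym F)`.
-/

open Filter Topology

theorem IsLocalMin.deriv_deriv_nonneg {g : ℝ → ℝ} {a : ℝ} (hmin : IsLocalMin g a)
    (hcont : ContinuousAt g a) : 0 ≤ deriv (deriv g) a := by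
  by_contra! hneg
  have hmax : IsLocalMax g a := isLocalMax_of_deriv_deriv_neg hneg hmin.deriv_eq_zero hcont
  have hconst : g =ᶠ[𝓝 a] fun _ => g a :=
    (hmin.and hmax).mono fun _ hy => le_antisymm hy.2 hy.1
  have hderiv : deriv g =ᶠ[𝓝 a] fun _ => 0 := hconst.deriv.trans (by simp)
  simp [hderiv.deriv_eq] at hneg

section NormedSpace

variable {E F : Type*} [NormedAddCommGroup E] [NormedSpace ℝ E]
  [NormedAddCommGroup F] [NormedSpace ℝ F]

theorem IsLocalMin.apply_self_nonneg_of_hasFDerivAt_fderiv {f : E → ℝ} {x : E}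
    {f'' : E →L[ℝ] E →L[ℝ] ℝ} (hmin : IsLocalMin f x)
    (hdiff : ∀ᶠ y in 𝓝 x, DifferentiableAt ℝ f y) (h2 : HasFDerivAt (fderiv ℝ f) f'' x)
    (v : E) : 0 ≤ f'' v v := by
  obtain ⟨line, hline, hline0⟩ : ∃ line : ℝ → E, (∀ t, HasDerivAt line v t) ∧ line 0 = x :=
    ⟨fun t => x + t • v, fun t => by simpa using ((hasDerivAt_id t).smul_const v).const_add x,
      by simp⟩
  have hdiff' : ∀ᶠ t in 𝓝 (0 : ℝ), DifferentiableAt ℝ f (line t) :=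
    (hline 0).continuousAt.tendsto.eventually (hline0 ▸ hdiff)
  have hderiv : deriv (f ∘ line) =ᶠ[𝓝 0] fun t => fderiv ℝ f (line t) v :=
    hdiff'.mono fun t ht => (ht.hasFDerivAt.comp_hasDerivAt t (hline t)).deriv
  have hderiv2 : HasDerivAt (fun t => fderiv ℝ f (line t) v) (f'' v v) 0 :=
    ((hline0 ▸ h2).comp_hasDerivAt 0 (hline 0)).clm_apply (hasDerivAt_const 0 v) |>.congr_deriv
      (by simp)
  have hmin' : IsLocalMin (f ∘ line) 0 := (hline0 ▸ hmin).comp_continuous (hline 0).continuousAt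
  have hcont : ContinuousAt (f ∘ line) 0 :=
    hdiff.self_of_nhds.continuousAt.comp_of_eq (hline 0).continuousAt hline0
  simpa [hderiv.deriv_eq, hderiv2.deriv] using hmin'.deriv_deriv_nonneg hcont

theorem HasFDerivAt.apply_eq_zero_of_forall_comp_eq_zero {g : E → F} {g' : E →L[ℝ] F}
    {x v : E} {c : ℝ → E} (hg : HasFDerivAt g g' x) (hc0 : c 0 = x) (hc : HasDerivAt c v 0)
    (hgc : ∀ t, g (c t) = 0) : g' v = 0 := by
  have h := (hc0 ▸ hg).comp_hasDerivAt 0 hc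
  rw [show g ∘ c = fun _ => 0 from funext hgc] at h
  exact h.unique (hasDerivAt_const 0 0)

end NormedSpace

section MatrixExp

open NormedSpace

variable {n : Type*} [Fintype n] [DecidableEq n]

theorem Matrix.transpose_exp_mul_exp_of_transpose_eq_neg {A : Matrix n n ℝ} (hA : Aᵀ = -A) :
    (exp A)ᵀ * exp A = 1 := by
  rw [← Matrix.exp_transpose, hA, ← Matrix.exp_add_of_commute _ _ (Commute.refl A).neg_left,
    neg_add_cancel, exp_zero]

theorem Matrix.det_exp_of_transpose_eq_neg {A : Matrix n n ℝ} (hA : Aᵀ = -A) :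
    (exp A).det = 1 := by
  have hsq : (exp A).det ^ 2 = 1 := by
    simpa [sq, Matrix.det_mul] using congrArg det (transpose_exp_mul_exp_of_transpose_eq_neg hA)
  have hnonneg : 0 ≤ (exp A).det := by
    have halves : A = (1 / 2 : ℝ) • A + (1 / 2 : ℝ) • A := by rw [← add_smul]; norm_num
    rw [halves, Matrix.exp_add_of_commute _ _ (Commute.refl _), det_mul]
    exact mul_self_nonneg _
  nlinarith

theorem exp_mem_SO3 {A : Mat3} (hA : Aᵀ = -A) : exp A ∈ SO3 :=
  ⟨Matrix.transpose_exp_mul_exp_of_transpose_eq_neg hA, Matrix.det_exp_of_transpose_eq_neg hA⟩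

attribute [local instance] Matrix.frobeniusNormedRing Matrix.frobeniusNormedAlgebra in
theorem hasDerivAt_exp_smul_zero (A : Mat3) : HasDerivAt (fun t : ℝ => exp (t • A)) A 0 := by
  have h := hasDerivAt_exp_smul_const (𝕂 := ℝ) A 0
  rwa [zero_smul, exp_zero, one_mul] at h

end MatrixExp

theorem finner_transpose_left (M N : Mat3) : finner Mᵀ N = finner M Nᵀ := by
  simp only [finner, transpose_apply]
  exact Finset.sum_comm

theorem finner_single (M : Mat3) (i j : Fin 3) : finner M (single i j 1) = M i j := by
  simp [finner, single_apply, ite_and]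

theorem ext_finner {M N : Mat3} (h : ∀ G, finner M G = finner N G) : M = N := by
  ext i j
  simpa only [finner_single] using h (single i j 1)

theorem symPart_transpose (M : Mat3) : symPart Mᵀ = symPart M := by
  simp [symPart, add_comm]

theorem transpose_sub_symPart (M : Mat3) : (M - symPart M)ᵀ = -(M - symPart M) := by
  ext i j
  simp only [symPart, transpose_apply, Matrix.sub_apply, Matrix.smul_apply, Matrix.add_apply,
    Matrix.neg_apply, smul_eq_mul]
  ring

theorem apply_symPart_left {B : Mat3 →L[ℝ] Mat3 →L[ℝ] ℝ}
    (hskew : ∀ A : Mat3, Aᵀ = -A → B A = 0) (F G : Mat3) : B (symPart F) G = B F G := by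
  have h := congrArg (· G) (hskew _ (transpose_sub_symPart F))
  simp only [map_sub, _root_.sub_apply, _root_.zero_apply] at h
  linarith

theorem apply_symPart_right {B : Mat3 →L[ℝ] Mat3 →L[ℝ] ℝ} (hsymm : ∀ F G, B F G = B G F)
    (hskew : ∀ A : Mat3, Aᵀ = -A → B A = 0) (F G : Mat3) : B F (symPart G) = B F G := by
  rw [hsymm, apply_symPart_left hskew, hsymm]

theorem L_symmetric_and_Q_nonneg
    (W : Mat3 → ℝ) (U : Set Mat3) (hU : IsOpen U) (hIdU : (1 : Mat3) ∈ U)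
    (hC2 : ContDiffOn ℝ 2 W U)
    (hpos : ∀ F : Mat3, 0 ≤ W F)
    (hSO : ∀ R ∈ SO3, W R = 0)
    (L : Mat3 → Mat3)
    (hL : ∀ F₁ F₂ : Mat3, finner (L F₁) F₂ = fderiv ℝ (fderiv ℝ W) 1 F₁ F₂) :
    ∀ F : Mat3, (L F)ᵀ = L F ∧ 0 ≤ finner (L F) F ∧
      finner (L F) F = finner (L (symPart F)) (symPart F) := by
  set B := fderiv ℝ (fderiv ℝ W) 1
  have hW : ContDiffAt ℝ 2 W 1 := hC2.contDiffAt (hU.mem_nhds hIdU)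
  have hB : HasFDerivAt (fderiv ℝ W) B 1 :=
    ((hW.fderiv_right (m := 1) le_rfl).differentiableAt one_ne_zero).hasFDerivAt
  have hsymm : ∀ F G, B F G = B G F := hW.isSymmSndFDerivAt (by simp)
  have hmin : ∀ R ∈ SO3, IsLocalMin W R := fun R hR =>
    Eventually.of_forall fun F => (hSO R hR).symm ▸ hpos F
  have hskew : ∀ A : Mat3, Aᵀ = -A → B A = 0 := fun A hA =>
    hB.apply_eq_zero_of_forall_comp_eq_zero (c := fun t : ℝ => NormedSpace.exp (t • A))
      (by simp) (hasDerivAt_exp_smul_zero A) fun t =>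
        (hmin _ (exp_mem_SO3 (by rw [transpose_smul, hA, smul_neg]))).fderiv_eq_zero
  have hnonneg : ∀ H, 0 ≤ B H H :=
    (hmin 1 ⟨by simp, by simp⟩).apply_self_nonneg_of_hasFDerivAt_fderiv
      ((hW.eventually (by simp)).mono fun _ h => h.differentiableAt two_ne_zero) hB
  intro F
  refine ⟨ext_finner fun G => ?_, hL F F ▸ hnonneg F, ?_⟩
  · rw [finner_transpose_left, hL, hL, ← apply_symPart_right hsymm hskew, symPart_transpose,
      apply_symPart_right hsymm hskew]
  · rw [hL, hL, apply_symPart_left hskew, apply_symPart_right hsymm hskew]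
end
end

section
/- Let X be a reflexive Banach space, Y a Banach space, and ι : X → Y an injective continuous linear map. Let T > 0, M ≥ 0, and let f : [0,T] → X be a function such that (i) t ↦ ι(f(t)) is weakly continuous in Y, i.e. t ↦ ψ(ι(f(t))) is continuous on [0,T] for every ψ in the dual of Y, and (ii) ‖f(t)‖_X ≤ M for Lebesgue-almost every t ∈ [0,T]. Then ‖f(t)‖_X ≤ M for every t ∈ [0,T], and f is weakly continuous as an X-valued function, i.e. t ↦ φ(f(t)) is continuous on [0,T] for every φ in the dual of X. -/
/-!
Closed balls of a reflexive space are weakly compact (Banach–Alaoglu in the bidual), and `ι` stays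
continuous and injective for the weak topologies, so on the ball of radius `M` it is a
homeomorphism onto a weakly closed set. The times with `‖f t‖ ≤ M` are dense in `[0, T]`, their
complement being null; weak continuity of `ι ∘ f` then puts `ι (f t)` in the image of the ball
for every `t`, so `f t` lies in the ball, and weak continuity of `f` is that of `ι ∘ f` read
through the inverse homeomorphism.
-/

open MeasureTheory NormedSpace Filter Topology Set Function

section CompactInjective

variable {α β γ : Type*} [TopologicalSpace α] [TopologicalSpace β] [TopologicalSpace γ]
  [T2Space γ] {K : Set β} {ρ : β → γ} {u : α → β} {s : Set α}

theorem IsCompact.continuousOn_of_continuousOn_comp (hK : IsCompact K) (hρ : Continuous ρ)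
    (hρK : InjOn ρ K) (hu : MapsTo u s K) (h : ContinuousOn (ρ ∘ u) s) : ContinuousOn u s := by
  intro t ht
  refine hK.tendsto_nhds_of_unique_mapClusterPt (eventually_mem_nhdsWithin.mono hu)
    fun x hx hclust => hρK hx (hu ht) ?_
  exact eq_of_nhds_neBot ((hclust.tendsto_comp (hρ.tendsto x)).clusterPt.mono (h t ht))

theorem IsCompact.mem_of_continuousWithinAt_comp (hK : IsCompact K) (hρ : Continuous ρ)
    (hρi : Injective ρ) (hu : MapsTo u s K) {t : α} (h : ContinuousWithinAt (ρ ∘ u) s t)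
    (ht : t ∈ closure s) : u t ∈ K := by
  have himage : (ρ ∘ u) '' s ⊆ ρ '' K := by
    rw [image_comp]
    exact image_mono hu.image_subset
  obtain ⟨x, hx, hxt⟩ :=
    (hK.image hρ).isClosed.closure_subset_iff.2 himage (h.mem_closure_image ht)
  exact hρi hxt ▸ hx

end CompactInjective

theorem subset_closure_setOf_of_ae_restrict {α : Type*} [TopologicalSpace α] [MeasurableSpace α]
    [OpensMeasurableSpace α] {μ : Measure α} [μ.IsOpenPosMeasure] {s : Set α}
    (hs : s ⊆ closure (interior s)) {p : α → Prop} (h : ∀ᵐ x ∂μ.restrict s, p x) :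
    s ⊆ closure {x | x ∈ s ∧ p x} := by
  have hdense : Dense {x | x ∈ interior s → p x} :=
    μ.dense_of_ae ((ae_restrict_iff' isOpen_interior.measurableSet).1
      (ae_restrict_of_ae_restrict_of_subset interior_subset h))
  calc s ⊆ closure (interior s) := hs
    _ ⊆ closure (interior s ∩ {x | x ∈ interior s → p x}) :=
      closure_minimal (hdense.open_subset_closure_inter isOpen_interior) isClosed_closure
    _ ⊆ closure {x | x ∈ s ∧ p x} :=
      closure_mono fun x ⟨hx, hpx⟩ => ⟨interior_subset hx, hpx hx⟩

theorem continuousOn_toWeakSpace_iff {𝕜 E α : Type*} [CommSemiring 𝕜] [TopologicalSpace 𝕜]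
    [ContinuousAdd 𝕜] [ContinuousConstSMul 𝕜 𝕜] [AddCommMonoid E] [Module 𝕜 E] [TopologicalSpace E]
    [TopologicalSpace α] {f : α → E} {s : Set α} :
    ContinuousOn (fun a => toWeakSpace 𝕜 E (f a)) s ↔
      ∀ φ : StrongDual 𝕜 E, ContinuousOn (fun a => φ (f a)) s := by
  have hinducing : IsInducing fun (x : WeakSpace 𝕜 E) (φ : StrongDual 𝕜 E) => φ x := ⟨rfl⟩
  rw [hinducing.continuousOn_iff, continuousOn_pi]
  rfl

theorem isCompact_toWeakSpace_closedBall {X : Type*} [NormedAddCommGroup X] [NormedSpace ℝ X]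
    (hrefl : Surjective (inclusionInDoubleDual ℝ X)) (x : X) (r : ℝ) :
    IsCompact (toWeakSpace ℝ X '' Metric.closedBall x r) := by
  rw [← Metric.isClosed_closedBall.closure_eq, (convex_closedBall x r).toWeakSpace_closure ℝ]
  refine isCompact_closure_of_isBounded ℝ X _ ?_ fun Φ _ => ?_
  · rw [(toWeakSpace ℝ X).injective.preimage_image]
    exact Metric.isBounded_closedBall
  · obtain ⟨y, hy⟩ := hrefl (WeakDual.toStrongDual Φ)
    exact ⟨toWeakSpace ℝ X y, congrArg StrongDual.toWeakDual hy⟩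

theorem weakly_continuous_bounded_lift_general
    {X Y : Type*}
    [NormedAddCommGroup X] [NormedSpace ℝ X]
    [NormedAddCommGroup Y] [NormedSpace ℝ Y]
    (hrefl : Function.Surjective (inclusionInDoubleDual ℝ X))
    (ι : X →L[ℝ] Y) (hι : Function.Injective ι)
    (T : ℝ) (hT : 0 < T) (M : ℝ)
    (f : ℝ → X)
    (hweakY : ∀ ψ : StrongDual ℝ Y, ContinuousOn (fun t => ψ (ι (f t))) (Set.Icc 0 T))
    (hbound : ∀ᵐ t ∂(volume.restrict (Set.Icc 0 T)), ‖f t‖ ≤ M) :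
    (∀ t ∈ Set.Icc (0 : ℝ) T, ‖f t‖ ≤ M) ∧
      (∀ φ : StrongDual ℝ X, ContinuousOn (fun t => φ (f t)) (Set.Icc 0 T)) := by
  set u : ℝ → WeakSpace ℝ X := fun t => toWeakSpace ℝ X (f t)
  set K := toWeakSpace ℝ X '' Metric.closedBall 0 M
  have hK : IsCompact K := isCompact_toWeakSpace_closedBall hrefl 0 M
  have hmap : Continuous (WeakSpace.map ι) := map_continuous (WeakSpace.map ι)
  have hιu : ContinuousOn (WeakSpace.map ι ∘ u) (Icc 0 T) :=
    continuousOn_toWeakSpace_iff (E := Y) (f := fun t => ι (f t)) |>.2 hweakY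
  have hdense : Icc 0 T ⊆ closure {t | t ∈ Icc 0 T ∧ ‖f t‖ ≤ M} :=
    subset_closure_setOf_of_ae_restrict (by rw [interior_Icc, closure_Ioo hT.ne]) hbound
  have huK : MapsTo u (Icc 0 T) K := fun t ht =>
    hK.mem_of_continuousWithinAt_comp hmap hι
      (fun s hs => ⟨f s, mem_closedBall_zero_iff.2 hs.2, rfl⟩)
      ((hιu t ht).mono (sep_subset _ _)) (hdense ht)
  refine ⟨fun t ht => ?_, continuousOn_toWeakSpace_iff.1 ?_⟩
  · simpa using (toWeakSpace ℝ X).injective.mem_set_image.1 (huK ht)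
  · exact hK.continuousOn_of_continuousOn_comp hmap hι.injOn huK hιu

theorem weakly_continuous_bounded_lift
    {X Y : Type*}
    [NormedAddCommGroup X] [NormedSpace ℝ X] [CompleteSpace X]
    [NormedAddCommGroup Y] [NormedSpace ℝ Y] [CompleteSpace Y]
    (hrefl : Function.Surjective (inclusionInDoubleDual ℝ X))
    (ι : X →L[ℝ] Y) (hι : Function.Injective ι)
    (T : ℝ) (hT : 0 < T) (M : ℝ) (hM : 0 ≤ M)
    (f : ℝ → X)
    (hweakY : ∀ ψ : StrongDual ℝ Y, ContinuousOn (fun t => ψ (ι (f t))) (Set.Icc 0 T))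
    (hbound : ∀ᵐ t ∂(volume.restrict (Set.Icc 0 T)), ‖f t‖ ≤ M) :
    (∀ t ∈ Set.Icc (0 : ℝ) T, ‖f t‖ ≤ M) ∧
      (∀ φ : StrongDual ℝ X, ContinuousOn (fun t => φ (f t)) (Set.Icc 0 T)) :=
  weakly_continuous_bounded_lift_general hrefl ι hι T hT M f hweakY hbound
end

section
/- Let T > 0, h ∈ (0,1], C₀ ≥ 0, and let g ∈ L²((0,T)) with g ≥ 0 almost everywhere. Let a, b : (0,T) → [0, ∞) be measurable, with a essentially bounded, and suppose that for almost every t ∈ (0,T): (h²/2) a(t) + b(t) ≤ C₀ h⁴ + h³ ∫₀^t g(s) √(a(s)) ds. Then, with C₁ := 2(√C₀ + ‖g‖_{L²(0,T)} √(T/2))², one has a(t) ≤ C₁ h² and b(t) ≤ C₁ h⁴ for almost every t ∈ (0,T). -/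
/-!
Put `A(t) = 2C₀h² + 2h ∫₀ᵗ g √a`. The hypothesis gives `a ≤ A` a.e., and `A` is continuous and
nondecreasing, so `A(t) - A(s) ≤ 2h √A(t) ∫ₛᵗ g` for `s ≤ t`. For differentiable `A` this would
read `(√A)' ≤ h g`; the increment inequality alone already gives `√A(t) ≤ √A(0) + h ∫₀ᵗ g`, since
by continuous induction `√A` stays below `√A(0) + ε + (h + ε) ∫₀ᵗ g` for every `ε > 0`.
Hence `(h²/2) a + b ≤ (h²/2) A ≤ (h⁴/2)(√(2C₀) + ∫₀ᵀ g)²`, and Cauchy–Schwarz,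
`∫₀ᵀ g ≤ ‖g‖₂ √T`, bounds this by `(√C₀ + ‖g‖₂ √(T/2))² h⁴`.
-/

open MeasureTheory Set Filter Topology

theorem le_add_of_sq_sub_sq_le {x y B Δ c ε : ℝ} (hx : 0 ≤ x) (hxB : x ≤ B) (hc : 0 ≤ c)
    (hε : 0 ≤ ε) (hΔ : 0 ≤ Δ) (hsmall : c * ((c + ε) * Δ) ≤ B * ε)
    (h : y ^ 2 - x ^ 2 ≤ 2 * c * y * Δ) : y ≤ B + (c + ε) * Δ := by
  by_contra! hy
  nlinarith [mul_le_mul_of_nonneg_right hsmall hΔ, mul_le_mul hxB hxB hx (hx.trans hxB),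
    mul_nonneg hε hΔ, mul_nonneg hc hΔ]

section Comparison

variable {F G : ℝ → ℝ} {a b c : ℝ}

theorem le_add_add_mul_sub_of_sq_sub_sq_le {ε : ℝ} (hc : 0 ≤ c) (hε : 0 < ε)
    (hF : ContinuousOn F (Icc a b)) (hG : ContinuousOn G (Icc a b))
    (hG_mono : MonotoneOn G (Icc a b)) (hF_nonneg : ∀ t ∈ Icc a b, 0 ≤ F t)
    (hstep : ∀ s ∈ Icc a b, ∀ t ∈ Icc a b, s ≤ t →
      F t ^ 2 - F s ^ 2 ≤ 2 * c * F t * (G t - G s)) :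
    ∀ t ∈ Icc a b, F t ≤ F a + ε + (c + ε) * (G t - G a) := by
  set B : ℝ → ℝ := fun t ↦ F a + ε + (c + ε) * (G t - G a)
  rcases lt_or_ge b a with hba | hab
  · simp [Icc_eq_empty_of_lt hba]
  have haI : a ∈ Icc a b := left_mem_Icc.2 hab
  have hB_pos : ∀ x ∈ Icc a b, 0 < B x := fun x hx ↦ by
    have := mul_nonneg (add_nonneg hc hε.le) (sub_nonneg.2 (hG_mono haI hx hx.1))
    simp only [B]
    linarith [hF_nonneg a haI]
  have hclosed : IsClosed {t ∈ Icc a b | F t ≤ B t} :=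
    isClosed_Icc.isClosed_le hF (continuousOn_const.add (continuousOn_const.mul
      (hG.sub continuousOn_const)))
  refine fun t ht ↦ (IsClosed.Icc_subset_of_forall_mem_nhdsWithin (s := {t ∈ Icc a b | F t ≤ B t})
    (by rwa [inter_eq_left.2 (sep_subset _ _)]) ⟨haI, by simpa [B] using hε.le⟩ ?_ ht).2
  rintro x ⟨⟨hxI, hxB⟩, hxb⟩
  -- `B x ≥ ε > 0`, so the smallness condition of the one-step estimate holds just right of `x`.
  have hGx : Tendsto (fun t ↦ c * ((c + ε) * (G t - G x))) (𝓝[>] x) (𝓝 0) := by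
    have hIcc : Icc a b ∈ 𝓝[>] x := mem_of_superset (Ioo_mem_nhdsGT hxb.2)
      (Ioo_subset_Icc_self.trans (Icc_subset_Icc_left hxb.1))
    simpa using (((hG x hxI).mono_of_mem_nhdsWithin hIcc).tendsto.sub_const (G x)).const_mul
      (c + ε) |>.const_mul c
  filter_upwards [Ioo_mem_nhdsGT hxb.2, hGx.eventually_lt_const (mul_pos (hB_pos x hxI) hε)]
    with t ht hsmall
  have htI : t ∈ Icc a b := ⟨hxb.1.trans ht.1.le, ht.2.le⟩
  refine ⟨htI, ?_⟩
  have := le_add_of_sq_sub_sq_le (hF_nonneg x hxI) hxB hc hε.le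
    (sub_nonneg.2 (hG_mono hxI htI ht.1.le)) hsmall.le (hstep x hxI t htI ht.1.le)
  simp only [B] at this ⊢
  linarith

theorem le_add_mul_sub_of_sq_sub_sq_le (hc : 0 ≤ c)
    (hF : ContinuousOn F (Icc a b)) (hG : ContinuousOn G (Icc a b))
    (hG_mono : MonotoneOn G (Icc a b)) (hF_nonneg : ∀ t ∈ Icc a b, 0 ≤ F t)
    (hstep : ∀ s ∈ Icc a b, ∀ t ∈ Icc a b, s ≤ t →
      F t ^ 2 - F s ^ 2 ≤ 2 * c * F t * (G t - G s)) :
    ∀ t ∈ Icc a b, F t ≤ F a + c * (G t - G a) := by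
  intro t ht
  have hΔ : 0 ≤ G t - G a := sub_nonneg.2 (hG_mono (left_mem_Icc.2 (ht.1.trans ht.2)) ht ht.1)
  refine le_of_forall_pos_le_add fun η hη ↦ ?_
  have hε : 0 < η / (1 + (G t - G a)) := by positivity
  have := le_add_add_mul_sub_of_sq_sub_sq_le hc hε hF hG hG_mono hF_nonneg hstep t ht
  have hη' : η / (1 + (G t - G a)) * (1 + (G t - G a)) = η := div_mul_cancel₀ _ (by positivity)
  linarith

end Comparison

theorem monotoneOn_integral_of_ae_nonneg {f : ℝ → ℝ} {a b : ℝ}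
    (hf : IntervalIntegrable f volume a b) (hf_nonneg : 0 ≤ᵐ[volume.restrict (Ioc a b)] f) :
    MonotoneOn (fun t ↦ ∫ u in a..t, f u) (Icc a b) := fun _ hs _ ht hst ↦
  intervalIntegral.integral_mono_interval le_rfl hs.1 hst
    (ae_restrict_of_ae_restrict_of_subset (Ioc_subset_Ioc_right ht.2) hf_nonneg)
    (hf.mono_set (uIcc_subset_uIcc left_mem_uIcc (Icc_subset_uIcc ht)))

theorem sqrt_add_mul_integral_sqrt_le {x g : ℝ → ℝ} {a b α k : ℝ} (hα : 0 ≤ α) (hk : 0 ≤ k)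
    (hg : IntervalIntegrable g volume a b)
    (hgx : IntervalIntegrable (fun u ↦ g u * √(x u)) volume a b)
    (hg_nonneg : ∀ᵐ u ∂volume.restrict (Ioc a b), 0 ≤ g u)
    (hx : ∀ᵐ u ∂volume.restrict (Ioc a b), x u ≤ α + k * ∫ v in a..u, g v * √(x v)) :
    ∀ t ∈ Icc a b, √(α + k * ∫ v in a..t, g v * √(x v)) ≤ √α + k / 2 * ∫ v in a..t, g v := by
  rcases lt_or_ge b a with hba | hab
  · simp [Icc_eq_empty_of_lt hba]
  set A : ℝ → ℝ := fun t ↦ α + k * ∫ v in a..t, g v * √(x v)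
  set G : ℝ → ℝ := fun t ↦ ∫ v in a..t, g v
  have hsub : ∀ {s t}, s ∈ Icc a b → t ∈ Icc a b → uIcc s t ⊆ uIcc a b := fun hs ht ↦
    uIcc_subset_uIcc (Icc_subset_uIcc hs) (Icc_subset_uIcc ht)
  have hG_mono : MonotoneOn G (Icc a b) := monotoneOn_integral_of_ae_nonneg hg hg_nonneg
  have hA_mono : MonotoneOn A (Icc a b) := fun s hs t ht hst ↦ by
    have := monotoneOn_integral_of_ae_nonneg hgx
      (hg_nonneg.mono fun u hu ↦ mul_nonneg hu (Real.sqrt_nonneg _)) hs ht hst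
    simp only [A]
    gcongr
  have hA_nonneg : ∀ t ∈ Icc a b, 0 ≤ A t := fun t ht ↦
    hα.trans ((by simp [A] : α = A a).le.trans (hA_mono (left_mem_Icc.2 hab) ht ht.1))
  have hcont : ∀ {f : ℝ → ℝ}, IntervalIntegrable f volume a b →
      ContinuousOn (fun t ↦ ∫ u in a..t, f u) (Icc a b) := fun hf ↦ by
    simpa [uIcc_of_le hab] using intervalIntegral.continuousOn_primitive_interval' hf left_mem_uIcc
  have hstep : ∀ s ∈ Icc a b, ∀ t ∈ Icc a b, s ≤ t →
      √(A t) ^ 2 - √(A s) ^ 2 ≤ 2 * (k / 2) * √(A t) * (G t - G s) := by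
    intro s hs t ht hst
    have hpt : ∀ᵐ u ∂volume.restrict (Ioc s t), g u * √(x u) ≤ g u * √(A t) := by
      have hsub' : Ioc s t ⊆ Ioc a b := Ioc_subset_Ioc hs.1 ht.2
      filter_upwards [ae_restrict_of_ae_restrict_of_subset hsub' hg_nonneg,
        ae_restrict_of_ae_restrict_of_subset hsub' hx, ae_restrict_mem measurableSet_Ioc]
        with u hgu hxu hu
      have hAu : A u ≤ A t := hA_mono ⟨hs.1.trans hu.1.le, hu.2.trans ht.2⟩ ht hu.2
      exact mul_le_mul_of_nonneg_left (Real.sqrt_le_sqrt (hxu.trans hAu)) hgu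
    have hint : ∫ u in s..t, g u * √(x u) ≤ (G t - G s) * √(A t) := by
      simp only [G]
      rw [intervalIntegral.integral_interval_sub_left (hg.mono_set (hsub (left_mem_Icc.2 hab) ht))
        (hg.mono_set (hsub (left_mem_Icc.2 hab) hs)), ← intervalIntegral.integral_mul_const,
        intervalIntegral.integral_of_le hst, intervalIntegral.integral_of_le hst]
      exact setIntegral_mono_ae_restrict ((hgx.mono_set (hsub hs ht)).1)
        ((hg.mono_set (hsub hs ht)).1.mul_const _) hpt
    have hA_sub : A t - A s = k * ∫ u in s..t, g u * √(x u) := by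
      simp only [A]
      rw [← intervalIntegral.integral_interval_sub_left
        (hgx.mono_set (hsub (left_mem_Icc.2 hab) ht)) (hgx.mono_set (hsub (left_mem_Icc.2 hab) hs))]
      ring
    rw [Real.sq_sqrt (hA_nonneg t ht), Real.sq_sqrt (hA_nonneg s hs), hA_sub]
    linear_combination mul_le_mul_of_nonneg_left hint hk
  have hA_cont : ContinuousOn A (Icc a b) :=
    continuousOn_const.add (continuousOn_const.mul (hcont hgx))
  intro t ht
  simpa [A, G] using le_add_mul_sub_of_sq_sub_sq_le (F := fun t ↦ √(A t)) (by positivity)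
    hA_cont.sqrt (hcont hg) hG_mono (fun t _ ↦ Real.sqrt_nonneg _) hstep t ht

theorem integral_le_sqrt_integral_sq_mul_sqrt_measureReal {α : Type*} [MeasurableSpace α]
    {μ : Measure α} [IsFiniteMeasure μ] {f : α → ℝ} (hf : MemLp f 2 μ) :
    ∫ x, f x ∂μ ≤ √(∫ x, f x ^ 2 ∂μ) * √(μ.real univ) := by
  have hf' : MemLp f (ENNReal.ofReal 2) μ := by simpa using hf
  have hone : MemLp (fun _ ↦ (1 : ℝ)) (ENNReal.ofReal 2) μ := memLp_const 1
  calc ∫ x, f x ∂μ ≤ ∫ x, ‖f x‖ * ‖(1 : ℝ)‖ ∂μ := by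
        simpa using (le_abs_self _).trans (abs_integral_le_integral_abs (f := f) (μ := μ))
    _ ≤ (∫ x, ‖f x‖ ^ (2 : ℝ) ∂μ) ^ (1 / 2 : ℝ) * (∫ x, ‖(1 : ℝ)‖ ^ (2 : ℝ) ∂μ) ^ (1 / 2 : ℝ) :=
        integral_mul_norm_le_Lp_mul_Lq Real.HolderConjugate.two_two hf' hone
    _ = √(∫ x, f x ^ 2 ∂μ) * √(μ.real univ) := by
        simp [Real.sqrt_eq_rpow]

theorem ae_half_sq_mul_add_le_of_energy_ineq {T h C₀ : ℝ} {g a b : ℝ → ℝ} (hT : 0 ≤ T)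
    (h_pos : 0 < h) (hC₀ : 0 ≤ C₀) (hg : IntegrableOn g (Ioo 0 T))
    (hga : IntegrableOn (fun s ↦ g s * √(a s)) (Ioo 0 T))
    (hg_nonneg : ∀ᵐ t ∂volume.restrict (Ioo 0 T), 0 ≤ g t) (hb : ∀ t, 0 ≤ b t)
    (hineq : ∀ᵐ t ∂volume.restrict (Ioo 0 T),
      h ^ 2 / 2 * a t + b t ≤ C₀ * h ^ 4 + h ^ 3 * ∫ s in Ioo 0 t, g s * √(a s)) :
    ∀ᵐ t ∂volume.restrict (Ioo 0 T),
      h ^ 2 / 2 * a t + b t ≤ h ^ 4 / 2 * (√(2 * C₀) + ∫ s in Ioo 0 t, g s) ^ 2 := by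
  have hIoo : ∀ {f : ℝ → ℝ} {t : ℝ}, 0 ≤ t → ∫ s in Ioo 0 t, f s = ∫ s in 0..t, f s :=
    fun ht ↦ by rw [intervalIntegral.integral_of_le ht, integral_Ioc_eq_integral_Ioo]
  have hμ : volume.restrict (Ioo 0 T) = volume.restrict (Ioc 0 T) :=
    Measure.restrict_congr_set Ioo_ae_eq_Ioc
  have h_sqrtA := sqrt_add_mul_integral_sqrt_le (x := a) (α := 2 * C₀ * h ^ 2) (k := 2 * h)
    (by positivity) (by positivity) ((intervalIntegrable_iff_integrableOn_Ioo_of_le hT).2 hg)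
    ((intervalIntegrable_iff_integrableOn_Ioo_of_le hT).2 hga) (hμ ▸ hg_nonneg) <| by
      rw [← hμ]
      filter_upwards [hineq, ae_restrict_mem measurableSet_Ioo] with u hu hu_mem
      rw [hIoo hu_mem.1.le] at hu
      refine le_of_mul_le_mul_left ?_ (by positivity : (0 : ℝ) < h ^ 2 / 2)
      linear_combination hu + hb u
  filter_upwards [hineq, ae_restrict_mem measurableSet_Ioo] with t ht ht_mem
  rw [hIoo ht_mem.1.le] at ht ⊢
  have hA := (Real.sqrt_le_iff.1 (h_sqrtA t ⟨ht_mem.1.le, ht_mem.2.le⟩)).2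
  rw [Real.sqrt_mul (by positivity), Real.sqrt_sq h_pos.le] at hA
  linear_combination ht + h ^ 2 / 2 * hA

theorem gronwall_energy_estimate_general
    (T : ℝ) (hT : 0 < T) (h : ℝ) (hh : h ∈ Set.Ioc (0 : ℝ) 1)
    (C₀ : ℝ) (hC₀ : 0 ≤ C₀)
    (g : ℝ → ℝ) (hg : MemLp g 2 (volume.restrict (Set.Ioo 0 T)))
    (hgpos : ∀ᵐ t ∂(volume.restrict (Set.Ioo 0 T)), 0 ≤ g t)
    (a b : ℝ → ℝ) (ham : Measurable a)
    (hapos : ∀ t, 0 ≤ a t) (hbpos : ∀ t, 0 ≤ b t)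
    (habd : ∃ K : ℝ, ∀ᵐ t ∂(volume.restrict (Set.Ioo 0 T)), a t ≤ K)
    (hineq : ∀ᵐ t ∂(volume.restrict (Set.Ioo 0 T)),
      h ^ 2 / 2 * a t + b t ≤
        C₀ * h ^ 4 + h ^ 3 * ∫ s in Set.Ioo (0 : ℝ) t, g s * Real.sqrt (a s)) :
    ∀ᵐ t ∂(volume.restrict (Set.Ioo 0 T)),
      a t ≤ (2 * (Real.sqrt C₀ +
        Real.sqrt (∫ s in Set.Ioo (0 : ℝ) T, g s ^ 2) * Real.sqrt (T / 2)) ^ 2) * h ^ 2 ∧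
      b t ≤ (2 * (Real.sqrt C₀ +
        Real.sqrt (∫ s in Set.Ioo (0 : ℝ) T, g s ^ 2) * Real.sqrt (T / 2)) ^ 2) * h ^ 4 := by
  obtain ⟨h_pos, -⟩ := hh
  obtain ⟨K, hK⟩ := habd
  set R := √C₀ + √(∫ s in Ioo 0 T, g s ^ 2) * √(T / 2)
  have hg_int : IntegrableOn g (Ioo 0 T) := hg.integrable one_le_two
  have hga_int : IntegrableOn (fun s ↦ g s * √(a s)) (Ioo 0 T) :=
    hg_int.mul_bdd ham.sqrt.aestronglyMeasurable (hK.mono fun t ht ↦ by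
      rw [Real.norm_of_nonneg (Real.sqrt_nonneg _)]; exact Real.sqrt_le_sqrt ht)
  have hCS : ∫ s in Ioo 0 T, g s ≤ √(∫ s in Ioo 0 T, g s ^ 2) * √T := by
    simpa [hT.le] using integral_le_sqrt_integral_sq_mul_sqrt_measureReal hg
  filter_upwards [ae_half_sq_mul_add_le_of_energy_ineq hT.le h_pos hC₀ hg_int hga_int hgpos hbpos
    hineq, ae_restrict_mem measurableSet_Ioo] with t ht ht_mem
  have hsub : Ioo 0 t ⊆ Ioo 0 T := Ioo_subset_Ioo_right ht_mem.2.le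
  have hG_nonneg : 0 ≤ ∫ s in Ioo 0 t, g s :=
    setIntegral_nonneg_of_ae_restrict (ae_restrict_of_ae_restrict_of_subset hsub hgpos)
  have hG : ∫ s in Ioo 0 t, g s ≤ ∫ s in Ioo 0 T, g s :=
    setIntegral_mono_set hg_int hgpos hsub.eventuallyLE
  have hR : √(2 * C₀) + ∫ s in Ioo 0 t, g s ≤ √2 * R := by
    have hsqrtT : √2 * √(T / 2) = √T := by rw [← Real.sqrt_mul zero_le_two]; ring_nf
    rw [Real.sqrt_mul zero_le_two]
    linear_combination hG + hCS - √(∫ s in Ioo 0 T, g s ^ 2) * hsqrtT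
  have hsum : h ^ 2 / 2 * a t + b t ≤ R ^ 2 * h ^ 4 := calc
    _ ≤ h ^ 4 / 2 * (√(2 * C₀) + ∫ s in Ioo 0 t, g s) ^ 2 := ht
    _ ≤ h ^ 4 / 2 * (√2 * R) ^ 2 := by gcongr
    _ = R ^ 2 * h ^ 4 := by rw [mul_pow, Real.sq_sqrt zero_le_two]; ring
  have hh2 : 0 < h ^ 2 / 2 := by positivity
  refine ⟨le_of_mul_le_mul_left ?_ hh2, ?_⟩
  · linear_combination hsum + hbpos t
  · linear_combination hsum + mul_nonneg hh2.le (hapos t) +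
      mul_nonneg (sq_nonneg R) (pow_nonneg h_pos.le 4)

theorem gronwall_energy_estimate
    (T : ℝ) (hT : 0 < T) (h : ℝ) (hh : h ∈ Set.Ioc (0 : ℝ) 1)
    (C₀ : ℝ) (hC₀ : 0 ≤ C₀)
    (g : ℝ → ℝ) (hg : MemLp g 2 (volume.restrict (Set.Ioo 0 T)))
    (hgpos : ∀ᵐ t ∂(volume.restrict (Set.Ioo 0 T)), 0 ≤ g t)
    (a b : ℝ → ℝ) (ham : Measurable a) (hbm : Measurable b)
    (hapos : ∀ t, 0 ≤ a t) (hbpos : ∀ t, 0 ≤ b t)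
    (habd : ∃ K : ℝ, ∀ᵐ t ∂(volume.restrict (Set.Ioo 0 T)), a t ≤ K)
    (hineq : ∀ᵐ t ∂(volume.restrict (Set.Ioo 0 T)),
      h ^ 2 / 2 * a t + b t ≤
        C₀ * h ^ 4 + h ^ 3 * ∫ s in Set.Ioo (0 : ℝ) t, g s * Real.sqrt (a s)) :
    ∀ᵐ t ∂(volume.restrict (Set.Ioo 0 T)),
      a t ≤ (2 * (Real.sqrt C₀ +
        Real.sqrt (∫ s in Set.Ioo (0 : ℝ) T, g s ^ 2) * Real.sqrt (T / 2)) ^ 2) * h ^ 2 ∧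
      b t ≤ (2 * (Real.sqrt C₀ +
        Real.sqrt (∫ s in Set.Ioo (0 : ℝ) T, g s ^ 2) * Real.sqrt (T / 2)) ^ 2) * h ^ 4 :=
  gronwall_energy_estimate_general T hT h hh C₀ hC₀ g hg hgpos a b ham hapos hbpos habd hineq
end
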